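/- arXiv:0909.1094 — 2 statements merged into one kernel-verified Lean document; each statement's English description precedes it below -/
import Mathlib

section
/- Let (M, dist) be a metric space, f : M → M a map, and g : M → ℝ a Hölder continuous function with constant C ≥ 0 and exponent α ∈ (0, 1], i.e. |g(x) − g(y)| ≤ C·dist(x, y)^α for all x, y ∈ M. Let λ, λ_u ∈ (0, 1), ε > 0, n ≥ 1, and let y, z ∈ M be points whose orbits shadow each other in the hyperbolic fashion dist(f^i(y), f^i(z)) ≤ ε·(λ^i + λ_u^{n−1−i}) for all 0 ≤ i ≤ n−1. Then |∑_{i=0}^{n−1} g(f^i(y)) − ∑_{i=0}^{n−1} g(f^i(z))| ≤ C·ε^α·(1/(1 − λ^α) + 1/(1 − λ_u^α)); in particular the difference of the Birkhoff averages (1/n)∑_{i<n} g(f^i(y)) and (1/n)∑_{i<n} g(f^i(z)) is bounded by this constant divided by n, uniformly in n. -/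
/-! By Hölder continuity and the subadditivity of `t ↦ t ^ α` for `α ≤ 1`, the `i`-th term of
the difference of the Birkhoff sums is at most `C ε^α ((λ^α)^i + (λᵤ^α)^(n-1-i))`. Summing over
`i`, each of the two geometric sums is bounded by the full geometric series, whatever `n` is. -/

open Finset

lemma geom_sum_add_geom_sum_reflect_le {r s : ℝ} (hr0 : 0 ≤ r) (hr1 : r < 1) (hs0 : 0 ≤ s)
    (hs1 : s < 1) (n : ℕ) :
    ∑ i ∈ range n, (r ^ i + s ^ (n - 1 - i)) ≤ 1 / (1 - r) + 1 / (1 - s) := by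
  rw [sum_add_distrib, sum_range_reflect (s ^ ·) n, range_eq_Ico]
  gcongr
  · simpa using geom_sum_Ico_le_of_lt_one (m := 0) (n := n) hr0 hr1
  · simpa using geom_sum_Ico_le_of_lt_one (m := 0) (n := n) hs0 hs1

section Holder

variable {M : Type*} [PseudoMetricSpace M] {g : M → ℝ} {C α : ℝ}

lemma abs_sub_le_of_dist_le_mul_add (hC : 0 ≤ C) (hα0 : 0 ≤ α) (hα1 : α ≤ 1)
    (hg : ∀ x y : M, |g x - g y| ≤ C * dist x y ^ α) {x y : M} {ε s t : ℝ} (hε : 0 ≤ ε)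
    (hs : 0 ≤ s) (ht : 0 ≤ t) (h : dist x y ≤ ε * (s + t)) :
    |g x - g y| ≤ C * ε ^ α * (s ^ α + t ^ α) :=
  calc |g x - g y| ≤ C * dist x y ^ α := hg x y
    _ ≤ C * (ε * (s + t)) ^ α := by gcongr
    _ = C * ε ^ α * (s + t) ^ α := by rw [Real.mul_rpow hε (add_nonneg hs ht), mul_assoc]
    _ ≤ C * ε ^ α * (s ^ α + t ^ α) := by
      gcongr
      exact Real.rpow_add_le_add_rpow hs ht hα0 hα1

theorem abs_sum_sub_sum_le_of_dist_le_geom (hC : 0 ≤ C) (hα0 : 0 < α) (hα1 : α ≤ 1)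
    (hg : ∀ x y : M, |g x - g y| ≤ C * dist x y ^ α) {lam lamu ε : ℝ} (hlam0 : 0 ≤ lam)
    (hlam1 : lam < 1) (hlamu0 : 0 ≤ lamu) (hlamu1 : lamu < 1) (hε : 0 ≤ ε) {n : ℕ}
    {a b : ℕ → M} (hab : ∀ i < n, dist (a i) (b i) ≤ ε * (lam ^ i + lamu ^ (n - 1 - i))) :
    |∑ i ∈ range n, g (a i) - ∑ i ∈ range n, g (b i)| ≤
      C * ε ^ α * (1 / (1 - lam ^ α) + 1 / (1 - lamu ^ α)) := by
  have hterm : ∀ i ∈ range n, |g (a i) - g (b i)| ≤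
      C * ε ^ α * ((lam ^ α) ^ i + (lamu ^ α) ^ (n - 1 - i)) := fun i hi => by
    rw [Real.rpow_pow_comm hlam0, Real.rpow_pow_comm hlamu0]
    exact abs_sub_le_of_dist_le_mul_add hC hα0.le hα1 hg hε (by positivity) (by positivity)
      (hab i (mem_range.mp hi))
  calc |∑ i ∈ range n, g (a i) - ∑ i ∈ range n, g (b i)|
      ≤ ∑ i ∈ range n, |g (a i) - g (b i)| := by
        rw [← sum_sub_distrib]
        exact abs_sum_le_sum_abs _ _
    _ ≤ C * ε ^ α * ∑ i ∈ range n, ((lam ^ α) ^ i + (lamu ^ α) ^ (n - 1 - i)) := by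
        rw [mul_sum]
        exact sum_le_sum hterm
    _ ≤ C * ε ^ α * (1 / (1 - lam ^ α) + 1 / (1 - lamu ^ α)) := by
        gcongr
        exact geom_sum_add_geom_sum_reflect_le (by positivity) (Real.rpow_lt_one hlam0 hlam1 hα0)
          (by positivity) (Real.rpow_lt_one hlamu0 hlamu1 hα0) n

end Holder

lemma abs_one_div_mul_sub_le {a b K c : ℝ} (hc : 0 ≤ c) (h : |a - b| ≤ K) :
    |1 / c * a - 1 / c * b| ≤ K / c := by
  rw [← mul_sub, abs_mul, abs_of_nonneg (by positivity), one_div_mul_eq_div]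
  exact div_le_div_of_nonneg_right h hc

theorem holder_birkhoff_shadowing_general
    {M : Type*} [MetricSpace M] (f : M → M) (g : M → ℝ)
    (C : ℝ) (hC : 0 ≤ C) (α : ℝ) (hα0 : 0 < α) (hα1 : α ≤ 1)
    (hg : ∀ x y : M, |g x - g y| ≤ C * dist x y ^ α)
    (lam lamu : ℝ) (hlam : lam ∈ Set.Ioo (0 : ℝ) 1) (hlamu : lamu ∈ Set.Ioo (0 : ℝ) 1)
    (ε : ℝ) (hε : 0 < ε) (n : ℕ) (y z : M)
    (hshadow : ∀ i < n, dist (f^[i] y) (f^[i] z) ≤ ε * (lam ^ i + lamu ^ (n - 1 - i))) :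
    |∑ i ∈ Finset.range n, g (f^[i] y) - ∑ i ∈ Finset.range n, g (f^[i] z)| ≤
      C * ε ^ α * (1 / (1 - lam ^ α) + 1 / (1 - lamu ^ α)) ∧
    |(1 / (n : ℝ)) * ∑ i ∈ Finset.range n, g (f^[i] y) -
        (1 / (n : ℝ)) * ∑ i ∈ Finset.range n, g (f^[i] z)| ≤
      C * ε ^ α * (1 / (1 - lam ^ α) + 1 / (1 - lamu ^ α)) / n := by
  have hsum := abs_sum_sub_sum_le_of_dist_le_geom hC hα0 hα1 hg hlam.1.le hlam.2 hlamu.1.le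
    hlamu.2 hε.le hshadow
  exact ⟨hsum, abs_one_div_mul_sub_le n.cast_nonneg hsum⟩

/-- Hölder shadowing estimate for Birkhoff sums: if `g` is `(C, α)`-Hölder
and the orbits of `y` and `z` satisfy
`dist (f^[i] y) (f^[i] z) ≤ ε (λ^i + λᵤ^(n-1-i))` for `0 ≤ i ≤ n-1`, then the Birkhoff
sums of `g` along the two orbits differ by at most
`C ε^α (1/(1-λ^α) + 1/(1-λᵤ^α))`, uniformly in `n`; in particular the Birkhoff averages
differ by at most this constant divided by `n`. -/
theorem holder_birkhoff_shadowing
    {M : Type*} [MetricSpace M] (f : M → M) (g : M → ℝ)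
    (C : ℝ) (hC : 0 ≤ C) (α : ℝ) (hα0 : 0 < α) (hα1 : α ≤ 1)
    (hg : ∀ x y : M, |g x - g y| ≤ C * dist x y ^ α)
    (lam lamu : ℝ) (hlam : lam ∈ Set.Ioo (0 : ℝ) 1) (hlamu : lamu ∈ Set.Ioo (0 : ℝ) 1)
    (ε : ℝ) (hε : 0 < ε) (n : ℕ) (hn : 1 ≤ n) (y z : M)
    (hshadow : ∀ i < n, dist (f^[i] y) (f^[i] z) ≤ ε * (lam ^ i + lamu ^ (n - 1 - i))) :
    |∑ i ∈ Finset.range n, g (f^[i] y) - ∑ i ∈ Finset.range n, g (f^[i] z)| ≤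
      C * ε ^ α * (1 / (1 - lam ^ α) + 1 / (1 - lamu ^ α)) ∧
    |(1 / (n : ℝ)) * ∑ i ∈ Finset.range n, g (f^[i] y) -
        (1 / (n : ℝ)) * ∑ i ∈ Finset.range n, g (f^[i] z)| ≤
      C * ε ^ α * (1 / (1 - lam ^ α) + 1 / (1 - lamu ^ α)) / n :=
  holder_birkhoff_shadowing_general f g C hC α hα0 hα1 hg lam lamu hlam hlamu ε hε n y z hshadow
end

section
/- Let Λ be a compact metric space and f : Λ → Λ a continuous surjective map. The natural extension (inverse limit) is Λ̂ := {x̂ : ℕ → Λ | f(x̂(n+1)) = x̂(n) for all n ≥ 0}, a subspace of the product Λ^ℕ with the product topology; the shift map f̂ : Λ̂ → Λ̂ is f̂(x̂) = (f(x̂(0)), x̂(0), x̂(1), …); the canonical projection π : Λ̂ → Λ is π(x̂) = x̂(0). Let μ be an f-invariant Borel probability measure on Λ and μ̂ an f̂-invariant Borel probability measure on Λ̂ with π_*μ̂ = μ. Then for every closed set F̂ ⊆ Λ̂ one has μ̂(F̂) = lim_{n→∞} μ(p_n(F̂)), where p_n : Λ̂ → Λ, p_n(x̂) = x̂(n), is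 the n-th coordinate projection (so that p_n(F̂) is the compact set of n-th coordinates x_{−n} of prehistories x̂ ∈ F̂). -/
open MeasureTheory Filter

/-- The natural extension (inverse limit) of `f : Λ → Λ`: the space of full prehistories
`(x₀, x₋₁, x₋₂, …)` with `f (x (n+1)) = x n`, as a subspace of `Λ^ℕ` with the
product topology. -/
def NatExt {Λ : Type*} (f : Λ → Λ) : Set (ℕ → Λ) :=
  {x | ∀ n : ℕ, f (x (n + 1)) = x n}

/-- The shift map `f̂` on the natural extension: `f̂ x = (f (x 0), x 0, x 1, …)`. -/
def natExtShift {Λ : Type*} (f : Λ → Λ) : NatExt f → NatExt f := fun x =>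
  ⟨fun n => match n with
    | 0 => f (x.val 0)
    | k + 1 => x.val k,
   by
    intro n
    cases n with
    | zero => rfl
    | succ k => exact x.prop k⟩

/-!
The sets `Gₙ = pₙ⁻¹(pₙ F)` of prehistories whose `n`-th coordinate is that of some point of `F`
decrease, since `pₙ = f ∘ pₙ₊₁`, and have intersection `F` when `F` is closed: a point `x` of
every `Gₙ` is the limit of points of `F` agreeing with `x` in the first `n` coordinates.
Shift invariance gives `(pₙ)_* μ̂ = (p₀)_* μ̂ = μ`, so `μ (pₙ F) = μ̂ Gₙ`, and continuity of the
finite measure `μ̂` along decreasing sequences concludes.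
-/

open Topology

namespace NatExt

variable {Λ : Type*} {f : Λ → Λ}

/-- The projection `pₙ` of the paper: `x n` is the coordinate `x₋ₙ` of a prehistory. -/
def proj (f : Λ → Λ) (n : ℕ) (x : NatExt f) : Λ := x.val n

theorem proj_comp_natExtShift (n : ℕ) : proj f (n + 1) ∘ natExtShift f = proj f n := rfl

theorem proj_eq_of_proj_eq {x y : NatExt f} {n : ℕ} (h : proj f n y = proj f n x) :
    ∀ k ≤ n, proj f k y = proj f k x := by
  induction n with
  | zero => intro k hk; rwa [Nat.le_zero.mp hk]
  | succ n ih =>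
    intro k hk
    rcases hk.eq_or_lt with rfl | hlt
    · exact h
    · refine ih ?_ k (Nat.lt_succ_iff.mp hlt)
      calc proj f n y = f (proj f (n + 1) y) := (y.prop n).symm
        _ = f (proj f (n + 1) x) := by rw [h]
        _ = proj f n x := x.prop n

theorem antitone_preimage_image_proj (F : Set (NatExt f)) :
    Antitone fun n => proj f n ⁻¹' (proj f n '' F) := by
  refine antitone_nat_of_succ_le fun n x ⟨y, hyF, hy⟩ => ⟨y, hyF, ?_⟩
  exact proj_eq_of_proj_eq hy n n.le_succ

section Topology

variable [TopologicalSpace Λ]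

theorem continuous_proj (n : ℕ) : Continuous (proj f n) :=
  (continuous_apply n).comp continuous_subtype_val

theorem iInter_preimage_image_proj {F : Set (NatExt f)} (hF : IsClosed F) :
    ⋂ n, proj f n ⁻¹' (proj f n '' F) = F := by
  refine subset_antisymm (fun x hx => ?_) fun x hx => Set.mem_iInter.mpr fun n => ⟨x, hx, rfl⟩
  choose y hyF hy using Set.mem_iInter.mp hx
  have hyx : Tendsto y atTop (𝓝 x) := by
    rw [tendsto_subtype_rng, tendsto_pi_nhds]
    exact fun k => tendsto_atTop_of_eventually_const fun n hn => proj_eq_of_proj_eq (hy n) k hn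
  exact hF.mem_of_tendsto hyx (Eventually.of_forall hyF)

theorem isClosed [T2Space Λ] (hf : Continuous f) : IsClosed (NatExt f) := by
  have : NatExt f = ⋂ n : ℕ, {x : ℕ → Λ | f (x (n + 1)) = x n} := by
    ext x; simp [NatExt]
  rw [this]
  exact isClosed_iInter fun n =>
    isClosed_eq (hf.comp (continuous_apply (n + 1))) (continuous_apply n)

theorem compactSpace [CompactSpace Λ] [T2Space Λ] (hf : Continuous f) :
    CompactSpace (NatExt f) :=
  isCompact_iff_compactSpace.mp (isClosed hf).isCompact

theorem measurableSet_image_proj [CompactSpace Λ] [T2Space Λ] [MeasurableSpace Λ]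
    [OpensMeasurableSpace Λ] (hf : Continuous f) {F : Set (NatExt f)} (hF : IsClosed F)
    (n : ℕ) : MeasurableSet (proj f n '' F) :=
  have := compactSpace hf
  (hF.isCompact.image (continuous_proj n)).isClosed.measurableSet

end Topology

section Measure

variable [MeasurableSpace Λ]

theorem measurable_proj (n : ℕ) : Measurable (proj f n) :=
  (measurable_pi_apply n).comp measurable_subtype_coe

theorem measurable_natExtShift (hf : Measurable f) : Measurable (natExtShift f) := by
  refine Measurable.subtype_mk (measurable_pi_lambda _ fun n => ?_)
  cases n with
  | zero => exact hf.comp (measurable_proj 0)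
  | succ k => exact measurable_proj k

theorem map_proj_eq_map_proj_zero (hf : Measurable f) {μ' : Measure (NatExt f)}
    (hμ'inv : μ'.map (natExtShift f) = μ') (n : ℕ) :
    μ'.map (proj f n) = μ'.map (proj f 0) := by
  induction n with
  | zero => rfl
  | succ n ih =>
    rw [← ih, ← hμ'inv, Measure.map_map (measurable_proj _) (measurable_natExtShift hf),
      proj_comp_natExtShift, hμ'inv]

theorem tendsto_measure_preimage_image_proj [TopologicalSpace Λ] (μ' : Measure (NatExt f))
    [IsFiniteMeasure μ'] {F : Set (NatExt f)} (hF : IsClosed F)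
    (hmeas : ∀ n, MeasurableSet (proj f n '' F)) :
    Tendsto (fun n => μ' (proj f n ⁻¹' (proj f n '' F))) atTop (𝓝 (μ' F)) := by
  have := tendsto_measure_iInter_atTop (μ := μ')
    (fun n => (measurable_proj n (hmeas n)).nullMeasurableSet)
    (antitone_preimage_image_proj F) ⟨0, measure_ne_top μ' _⟩
  rwa [iInter_preimage_image_proj hF] at this

end Measure

end NatExt

theorem measure_of_closed_set_in_natural_extension_general
    {Λ : Type*} [MetricSpace Λ] [CompactSpace Λ] [MeasurableSpace Λ] [BorelSpace Λ]
    (f : Λ → Λ) (hf : Continuous f)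
    (μ : Measure Λ)
    (μ' : Measure (NatExt f)) (hμ'prob : IsProbabilityMeasure μ')
    (hμ'inv : μ'.map (natExtShift f) = μ')
    (hproj : μ'.map (fun x : NatExt f => x.val 0) = μ)
    (F : Set (NatExt f)) (hF : IsClosed F) :
    Tendsto (fun n : ℕ => μ ((fun x : NatExt f => x.val n) '' F)) atTop
      (nhds (μ' F)) := by
  change Tendsto (fun n => μ (NatExt.proj f n '' F)) atTop (𝓝 (μ' F))
  change μ'.map (NatExt.proj f 0) = μ at hproj
  have hmeas := NatExt.measurableSet_image_proj hf hF
  have hμ (n : ℕ) :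
      μ (NatExt.proj f n '' F) = μ' (NatExt.proj f n ⁻¹' (NatExt.proj f n '' F)) := by
    rw [← hproj, ← NatExt.map_proj_eq_map_proj_zero hf.measurable hμ'inv n,
      Measure.map_apply (NatExt.measurable_proj n) (hmeas n)]
  simpa only [hμ] using NatExt.tendsto_measure_preimage_image_proj μ' hF hmeas

/-- if `μ` is `f`-invariant and `μ'` is a shift-invariant probability
measure on the natural extension projecting to `μ`, then for every closed set `F`
of prehistories, `μ' F = lim_n μ (pₙ F)` where `pₙ x = x n` is the `n`-th coordinate
projection (formula (mu-hat) of the paper). -/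
theorem measure_of_closed_set_in_natural_extension
    {Λ : Type*} [MetricSpace Λ] [CompactSpace Λ] [MeasurableSpace Λ] [BorelSpace Λ]
    (f : Λ → Λ) (hf : Continuous f) (hsurj : Function.Surjective f)
    (μ : Measure Λ) (hμprob : IsProbabilityMeasure μ) (hinv : μ.map f = μ)
    (μ' : Measure (NatExt f)) (hμ'prob : IsProbabilityMeasure μ')
    (hμ'inv : μ'.map (natExtShift f) = μ')
    (hproj : μ'.map (fun x : NatExt f => x.val 0) = μ)
    (F : Set (NatExt f)) (hF : IsClosed F) :
    Tendsto (fun n : ℕ => μ ((fun x : NatExt f => x.val n) '' F)) atTop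
      (nhds (μ' F)) :=
  measure_of_closed_set_in_natural_extension_general f hf μ μ' hμ'prob hμ'inv hproj F hF
end
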